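/- Let p be prime, S ⊆ ℤ/pℤ nonempty, and ψ : ℤ/pℤ → ℂ an arbitrary function. Then the dimension of the linear space L*(S) = {f : f(x) = ψ(x)a(x) for some a with supp â ⊆ S} equals min{|S|, |supp ψ|}. -/

import Mathlib

/-!
Writing `f = ψ · a` with `â` supported on `S`, the space `L*(S)` is spanned by the functions
`x ↦ ψ(x) e^{2πisx/p}`, `s ∈ S`. Its dimension is therefore at most `|S|`, and at most `|supp ψ|`
since all its elements vanish off `supp ψ`. For the reverse inequality it suffices to find a
nonsingular square submatrix of `(ψ(x) e^{2πisx/p})` of size `min{|S|, |supp ψ|}`, and by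
Chebotarëv's theorem every square submatrix of `(ζ^{xs})` is nonsingular.

Chebotarëv's theorem: a vanishing minor gives a kernel vector over `ℤ[ζ]`, which after dividing
by a power of the prime `π = ζ - 1` has a coordinate prime to `π`. Its entries are the
coefficients of a polynomial with at most `n` terms, all of degree `< p`, that vanishes at the `n`
distinct points `ζ^{x_i}`. Modulo `π`, where `ζ ≡ 1` and the residue field has characteristic `p`,
this gives a nonzero polynomial divisible by `(X - 1)^n`, which is impossible.
-/

open Polynomial Finset Function NumberField Matrix Submodule Module

namespace Polynomial

variable {R : Type*} [CommRing R]

theorem coeff_X_mul_derivative_sub_C_mul (f : R[X]) (k j : ℕ) :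
    (X * derivative f - C (k : R) * f).coeff j = ((j : R) - k) * f.coeff j := by
  rcases j with _ | j
  · simp
  · rw [coeff_sub, coeff_X_mul, coeff_derivative, coeff_C_mul]
    push_cast
    ring

theorem coeff_sum_C_mul_X_pow_of_injective {ι : Type*} [Fintype ι] {d : ι → ℕ} (hd : Injective d)
    (a : ι → R) (j : ι) : (∑ i, C (a i) * X ^ d i).coeff (d j) = a j := by
  classical
  simp_rw [finsetSum_coeff, coeff_C_mul_X_pow, hd.eq_iff]
  simp

theorem support_sum_C_mul_X_pow_subset {ι : Type*} [Fintype ι] (d : ι → ℕ) (a : ι → R) :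
    (∑ i, C (a i) * X ^ d i).support ⊆ univ.image d := by
  intro m hm
  by_contra hmd
  refine mem_support_iff.mp hm ?_
  rw [finsetSum_coeff]
  refine sum_eq_zero fun i _ => ?_
  rw [coeff_C_mul_X_pow, if_neg fun h : m = d i => hmd (h ▸ mem_image_of_mem d (mem_univ i))]

theorem prod_X_sub_C_dvd_of_isRoot [IsDomain R] {ι : Type*} [Fintype ι] {r : ι → R}
    (hr : Injective r) {Q : R[X]} (hQ : ∀ i, Q.IsRoot (r i)) : ∏ i, (X - C (r i)) ∣ Q := by
  rcases eq_or_ne Q 0 with rfl | hQ0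
  · exact dvd_zero _
  have hprod : ∏ i, (X - C (r i)) = ((univ.val.map r).map fun a => X - C a).prod := by
    rw [Multiset.map_map]; rfl
  rw [hprod, Multiset.prod_X_sub_C_dvd_iff_le_roots hQ0,
    Multiset.le_iff_subset (univ.nodup.map hr)]
  intro a ha
  obtain ⟨i, -, rfl⟩ := Multiset.mem_map.mp ha
  exact (mem_roots hQ0).mpr (hQ i)

theorem not_X_sub_one_dvd_of_support_eq_singleton {f : R[X]} {k : ℕ} (hf : f.support = {k}) :
    ¬ (X - 1) ∣ f := by
  rw [← map_one C, dvd_iff_isRoot, IsRoot, eval_eq_sum, Polynomial.sum_def, hf, sum_singleton,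
    one_pow, mul_one, ← Ne, ← mem_support_iff, hf]
  exact mem_singleton_self k

variable [IsDomain R] {p : ℕ} [CharP R p]

theorem not_X_sub_one_pow_dvd_of_natDegree_lt {n : ℕ} {f : R[X]} (hf : f ≠ 0)
    (hdeg : f.natDegree < p) (hsupp : #f.support ≤ n) : ¬ (X - 1) ^ n ∣ f := by
  induction n generalizing f with
  | zero => exact absurd (support_eq_empty.mp (card_eq_zero.mp (Nat.le_zero.mp hsupp))) hf
  | succ n ih =>
    intro hdvd
    obtain ⟨k, hk⟩ := support_nonempty.mpr hf
    -- `X f' - k f` kills the term `X^k`, keeps every other term (all exponents are `< p`), and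
    -- lowers the multiplicity of the root `1` by at most one.
    set g := X * derivative f - C (k : R) * f
    have hg_coeff : ∀ j, g.coeff j = ((j : R) - k) * f.coeff j :=
      coeff_X_mul_derivative_sub_C_mul f k
    have hcast : ∀ j ∈ f.support, (j : R) = k → j = k := fun j hj hjk =>
      ((CharP.natCast_eq_natCast R p).mp hjk).eq_of_lt_of_lt
        ((le_natDegree_of_mem_supp j hj).trans_lt hdeg)
        ((le_natDegree_of_mem_supp k hk).trans_lt hdeg)
    have hg_supp : g.support ⊆ f.support.erase k := by
      intro j hj
      rw [mem_support_iff, hg_coeff] at hj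
      exact mem_erase.mpr
        ⟨fun hjk => hj (by simp [hjk]), mem_support_iff.mpr (right_ne_zero_of_mul hj)⟩
    have hg_dvd : (X - 1) ^ n ∣ g :=
      dvd_sub ((pow_sub_one_dvd_derivative_of_pow_dvd hdvd).mul_left X)
        ((dvd_trans (pow_dvd_pow _ n.le_succ) hdvd).mul_left _)
    by_cases hg : g = 0
    · refine not_X_sub_one_dvd_of_support_eq_singleton (k := k) ?_
        ((dvd_pow_self _ n.succ_ne_zero).trans hdvd)
      refine Subset.antisymm (fun j hj => mem_singleton.mpr (hcast j hj ?_))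
        (singleton_subset_iff.mpr hk)
      have h0 := hg_coeff j
      rw [hg, coeff_zero, eq_comm, mul_eq_zero, sub_eq_zero] at h0
      exact h0.resolve_right (mem_support_iff.mp hj)
    · refine ih hg ?_ ?_ hg_dvd
      · exact (le_natDegree_of_mem_supp _ (hg_supp (natDegree_mem_support_of_nonzero hg)
          |> mem_of_mem_erase)).trans_lt hdeg
      · have := card_le_card hg_supp
        rw [card_erase_of_mem hk] at this
        omega

theorem not_X_sub_one_pow_dvd_sum_C_mul_X_pow {ι : Type*} [Fintype ι] {d : ι → ℕ}
    (hd : Injective d) (hdp : ∀ i, d i < p) {a : ι → R} (ha : a ≠ 0) :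
    ¬ (X - 1) ^ Fintype.card ι ∣ ∑ i, C (a i) * X ^ d i := by
  obtain ⟨j, hj⟩ : ∃ j, a j ≠ 0 := Function.ne_iff.mp ha
  have hsupp := support_sum_C_mul_X_pow_subset d a
  have hQ0 : ∑ i, C (a i) * X ^ d i ≠ 0 := fun h =>
    hj (by rw [← coeff_sum_C_mul_X_pow_of_injective hd a j, h, coeff_zero])
  refine not_X_sub_one_pow_dvd_of_natDegree_lt hQ0 ?_ (card_le_card hsupp |>.trans card_image_le)
  obtain ⟨i, -, hi⟩ := mem_image.mp (hsupp (natDegree_mem_support_of_nonzero hQ0))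
  exact hi ▸ hdp i

end Polynomial

section Multiplicity

variable {R : Type*} [CommRing R] [IsDomain R] [WfDvdMonoid R]

theorem exists_eq_pow_smul_and_not_dvd {ι : Type*} {π : R} (hπ : ¬IsUnit π) {c : ι → R}
    (hc : c ≠ 0) : ∃ (k : ℕ) (e : ι → R), c = π ^ k • e ∧ ∃ j, ¬π ∣ e j := by
  obtain ⟨j₀, hj₀⟩ : ∃ j, c j ≠ 0 := Function.ne_iff.mp hc
  obtain ⟨N, hN⟩ := FiniteMultiplicity.of_not_isUnit hπ hj₀
  obtain ⟨k, hk, hk₁⟩ : ∃ k, (∀ j, π ^ k ∣ c j) ∧ ¬∀ j, π ^ (k + 1) ∣ c j := by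
    by_contra! h
    have hall : ∀ k j, π ^ k ∣ c j := fun k => by
      induction k with
      | zero => simp
      | succ k ih => exact h k ih
    exact hN (hall (N + 1) j₀)
  choose e he using hk
  refine ⟨k, e, funext he, ?_⟩
  by_contra! h
  exact hk₁ fun j => he j ▸ pow_succ π k ▸ mul_dvd_mul_left _ (h j)

theorem Matrix.exists_mulVec_eq_zero_and_not_dvd {m n : Type*} [Fintype n] {M : Matrix m n R}
    {π : R} (hπ : Prime π) (h : ∃ c ≠ 0, M *ᵥ c = 0) : ∃ e, M *ᵥ e = 0 ∧ ∃ j, ¬π ∣ e j := by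
  obtain ⟨c, hc0, hc⟩ := h
  obtain ⟨k, e, rfl, he⟩ := exists_eq_pow_smul_and_not_dvd hπ.not_isUnit hc0
  rw [mulVec_smul, smul_eq_zero] at hc
  exact ⟨e, hc.resolve_left (pow_ne_zero k hπ.ne_zero), he⟩

end Multiplicity

section Chebotarev

variable {p : ℕ} [hp : Fact p.Prime] {K : Type*} [Field K] [NumberField K]
  [IsCyclotomicExtension {p} ℚ K] {ζ : K}

theorem IsPrimitiveRoot.det_toInteger_pow_mul_val_ne_zero (hζ : IsPrimitiveRoot ζ p) {n : ℕ}
    {x ξ : Fin n → ZMod p} (hx : Injective x) (hξ : Injective ξ) :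
    (Matrix.of fun i j => hζ.toInteger ^ ((x i).val * (ξ j).val)).det ≠ 0 := by
  set π := hζ.toInteger - 1
  have hπ : Prime π := hζ.zeta_sub_one_prime'
  intro hdet
  obtain ⟨e, he, j, hj⟩ :=
    Matrix.exists_mulVec_eq_zero_and_not_dvd hπ (Matrix.exists_mulVec_eq_zero_iff.mpr hdet)
  have : (Ideal.span {π}).IsPrime := (Ideal.span_singleton_prime hπ.ne_zero).mpr hπ
  set ρ := Ideal.Quotient.mk (Ideal.span {π})
  have : CharP (𝓞 K ⧸ Ideal.span {π}) p := (CharP.charP_iff_prime_eq_zero hp.out).mpr <| by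
    rw [← map_natCast ρ, Ideal.Quotient.eq_zero_iff_dvd]
    exact hζ.toInteger_sub_one_dvd_prime'
  have hρζ : ρ hζ.toInteger = 1 := by
    rw [← sub_eq_zero, ← map_one ρ, ← map_sub, Ideal.Quotient.eq_zero_iff_dvd]
  have hval : Injective fun j => (ξ j).val := (ZMod.val_injective p).comp hξ
  have hroot : ∀ i, (∑ j, C (e j) * X ^ (ξ j).val).IsRoot (hζ.toInteger ^ (x i).val) := by
    intro i
    rw [IsRoot, eval_finsetSum, ← Pi.zero_apply (M := fun _ => 𝓞 K) i, ← he]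
    refine sum_congr rfl fun j _ => ?_
    rw [eval_mul, eval_C, eval_pow, eval_X, ← pow_mul, mul_comm]
    rfl
  have hdvd := prod_X_sub_C_dvd_of_isRoot (fun i i' h => hx <| ZMod.val_injective p <|
    hζ.toInteger_isPrimitiveRoot.pow_inj (ZMod.val_lt _) (ZMod.val_lt _) h) hroot
  replace hdvd := map_dvd (mapRingHom ρ) hdvd
  simp only [map_prod, coe_mapRingHom, Polynomial.map_sub, map_X, map_C, map_pow, hρζ, map_one,
    one_pow, Polynomial.map_sum, Polynomial.map_mul, Polynomial.map_pow, prod_const, card_univ]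
    at hdvd
  have hρe : (fun j => ρ (e j)) ≠ 0 :=
    Function.ne_iff.mpr ⟨j, fun h => hj ((Ideal.Quotient.eq_zero_iff_dvd _ _).mp h)⟩
  exact not_X_sub_one_pow_dvd_sum_C_mul_X_pow hval (fun j => ZMod.val_lt _) hρe hdvd

open IntermediateField in
theorem IsPrimitiveRoot.det_pow_mul_val_ne_zero {L : Type*} [Field L] [CharZero L] {ω : L}
    (hω : IsPrimitiveRoot ω p) {n : ℕ} {x ξ : Fin n → ZMod p} (hx : Injective x)
    (hξ : Injective ξ) : (Matrix.of fun i j => ω ^ ((x i).val * (ξ j).val)).det ≠ 0 := by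
  have : IsCyclotomicExtension {p} ℚ ℚ⟮ω⟯ := by
    change IsCyclotomicExtension {p} ℚ ℚ⟮ω⟯.toSubalgebra
    rw [adjoin_simple_toSubalgebra_of_isAlgebraic
      (hω.isIntegral hp.out.pos).tower_top.isAlgebraic]
    exact hω.adjoin_isCyclotomicExtension ℚ
  have : NumberField ℚ⟮ω⟯ := IsCyclotomicExtension.numberField {p} ℚ _
  have hζ : IsPrimitiveRoot (AdjoinSimple.gen ℚ ω) p := coe_submonoidClass_iff.mp hω
  let f : 𝓞 ℚ⟮ω⟯ →+* L := (algebraMap ℚ⟮ω⟯ L).comp (algebraMap (𝓞 ℚ⟮ω⟯) ℚ⟮ω⟯)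
  have hf : Injective f := (algebraMap ℚ⟮ω⟯ L).injective.comp RingOfIntegers.coe_injective
  intro h
  refine hζ.det_toInteger_pow_mul_val_ne_zero hx hξ (hf ?_)
  rw [RingHom.map_det, map_zero, ← h]
  rfl

end Chebotarev

theorem Pi.mem_span_range_single_iff {ι R : Type*} [Semiring R] [DecidableEq ι] (S : Finset ι)
    (b : ι → R) :
    b ∈ span R (Set.range fun s : S => Pi.single (s : ι) (1 : R)) ↔ ∀ i ∉ S, b i = 0 := by
  constructor
  · intro hb
    induction hb using Submodule.span_induction with
    | mem f hf =>
      obtain ⟨s, rfl⟩ := hf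
      exact fun i hi => Pi.single_eq_of_ne (ne_of_mem_of_not_mem s.2 hi).symm _
    | zero => simp
    | add f g _ _ hf hg => simp_all
    | smul c f _ hf => simp_all
  · intro hb
    have : b = ∑ s : S, b s • Pi.single (s : ι) (1 : R) := by
      ext i
      simp only [Finset.sum_apply, Pi.smul_apply, Pi.single_apply, smul_eq_mul, mul_ite, mul_one,
        mul_zero]
      rw [univ_eq_attach, sum_attach S fun s => if i = s then b s else 0, sum_ite_eq]
      split_ifs with hi
      · rfl
      · exact hb i hi
    rw [this]
    exact sum_mem fun s _ => smul_mem _ _ (subset_span ⟨s, rfl⟩)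

section Rank

variable {K α : Type*} [Field K]

theorem Submodule.finrank_le_card_of_forall_apply_eq_zero [Finite α] (V : Submodule K (α → K))
    (T : Finset α) (hV : ∀ f ∈ V, ∀ x ∉ T, f x = 0) : finrank K V ≤ #T := by
  have hinj : Injective (LinearMap.funLeft K K ((↑) : T → α) ∘ₗ V.subtype) := by
    rw [← LinearMap.ker_eq_bot, LinearMap.ker_eq_bot']
    intro f hf
    ext x
    by_cases hx : x ∈ T
    · exact congrFun hf ⟨x, hx⟩
    · exact hV f f.2 x hx
  simpa using LinearMap.finrank_le_finrank_of_injective hinj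

theorem le_finrank_span_range_of_det_ne_zero [Finite α] {ι : Type*} {m : ℕ} (g : ι → α → K)
    (u : Fin m → ι) (v : Fin m → α) (h : (Matrix.of fun i j => g (u j) (v i)).det ≠ 0) :
    m ≤ finrank K (span K (Set.range g)) := by
  have hli : LinearIndependent K (g ∘ u) :=
    LinearIndependent.of_comp (LinearMap.funLeft K K v) (linearIndependent_cols_of_det_ne_zero h)
  calc m = finrank K (span K (Set.range (g ∘ u))) := by simp [finrank_span_eq_card hli]
    _ ≤ finrank K (span K (Set.range g)) :=
      Submodule.finrank_mono (span_mono (Set.range_comp_subset_range u g))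

end Rank

section Fourier

open ZMod

variable {N : ℕ} [NeZero N]

theorem ZMod.dft_apply_eq_sum_mul_exp (a : ZMod N → ℂ) (ξ : ZMod N) :
    𝓕 a ξ = ∑ x, a x * Complex.exp (-2 * Real.pi * Complex.I * ξ.val * x.val / N) := by
  refine sum_congr rfl fun x _ => ?_
  have : x * ξ = ((x.val * ξ.val : ℕ) : ZMod N) := by simp
  rw [smul_eq_mul, mul_comm, AddChar.map_neg_eq_inv, this, stdAddChar_apply, toCircle_natCast,
    ← Complex.exp_neg]
  push_cast
  ring_nf

theorem ZMod.stdAddChar_mul_eq_pow (a b : ZMod N) :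
    stdAddChar (a * b) = stdAddChar (1 : ZMod N) ^ (a.val * b.val) := by
  rw [← AddChar.map_nsmul_eq_pow, nsmul_eq_mul, mul_one, Nat.cast_mul, natCast_zmod_val,
    natCast_zmod_val]

theorem ZMod.isPrimitiveRoot_stdAddChar_one : IsPrimitiveRoot (stdAddChar (1 : ZMod N)) N := by
  have := stdAddChar_coe (N := N) 1
  simp only [Int.cast_one, mul_one] at this
  rw [this]
  exact Complex.isPrimitiveRoot_exp N (NeZero.ne N)

theorem ZMod.invDFT_single_one (s x : ZMod N) :
    𝓕⁻ (Pi.single s (1 : ℂ)) x = (N : ℂ)⁻¹ * stdAddChar (s * x) := by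
  simp [invDFT_apply, Pi.single_apply]

theorem ZMod.coe_span_range_mul_invDFT_single (S : Finset (ZMod N)) (ψ : ZMod N → ℂ) :
    (span ℂ (Set.range fun s : S => ψ * 𝓕⁻ (Pi.single (s : ZMod N) 1)) : Set (ZMod N → ℂ)) =
      {f | ∃ a : ZMod N → ℂ, (∀ ξ ∉ S, 𝓕 a ξ = 0) ∧ f = ψ * a} := by
  classical
  have hrange : (Set.range fun s : S => ψ * 𝓕⁻ (Pi.single (s : ZMod N) 1)) =
      (LinearMap.mulLeft ℂ ψ ∘ₗ (𝓕⁻ : (ZMod N → ℂ) ≃ₗ[ℂ] _).toLinearMap) ''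
        Set.range fun s : S => Pi.single (s : ZMod N) 1 := by
    rw [← Set.range_comp]; rfl
  ext f
  rw [hrange, ← map_span, SetLike.mem_coe, Submodule.mem_map]
  constructor
  · rintro ⟨b, hb, rfl⟩
    exact ⟨𝓕⁻ b, by simpa [Pi.mem_span_range_single_iff] using hb, rfl⟩
  · rintro ⟨a, ha, rfl⟩
    exact ⟨𝓕 a, (Pi.mem_span_range_single_iff S _).mpr ha, by simp⟩

theorem ZMod.finrank_span_range_mul_invDFT_single {p : ℕ} [Fact p.Prime] (S : Finset (ZMod p))
    (ψ : ZMod p → ℂ) :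
    finrank ℂ (span ℂ (Set.range fun s : S => ψ * 𝓕⁻ (Pi.single (s : ZMod p) 1))) =
      min #S (support ψ).ncard := by
  classical
  set g := fun s : S => ψ * 𝓕⁻ (Pi.single (s : ZMod p) (1 : ℂ))
  set T := (support ψ).toFinset
  rw [Set.ncard_eq_toFinset_card']
  refine le_antisymm (le_min ?_ ?_) ?_
  · simpa [Set.finrank] using finrank_range_le_card (R := ℂ) g
  · refine finrank_le_card_of_forall_apply_eq_zero _ T fun f hf x hx => ?_
    rw [← SetLike.mem_coe, coe_span_range_mul_invDFT_single] at hf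
    obtain ⟨a, -, rfl⟩ := hf
    simp_all [T]
  · obtain ⟨u⟩ : Nonempty (Fin (min #S #T) ↪ S) := by
      rw [Embedding.nonempty_iff_card_le]; simp
    obtain ⟨v⟩ : Nonempty (Fin (min #S #T) ↪ T) := by
      rw [Embedding.nonempty_iff_card_le]; simp
    refine le_finrank_span_range_of_det_ne_zero g u (fun i => (v i : ZMod p)) ?_
    have : (of fun i j => g (u j) (v i)) = diagonal (fun i => ψ (v i) * (p : ℂ)⁻¹) *
        of fun i j => stdAddChar (1 : ZMod p) ^ ((v i : ZMod p).val * (u j : ZMod p).val) := by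
      ext i j
      simp only [g, Pi.mul_apply, invDFT_single_one, stdAddChar_mul_eq_pow, of_apply, mul_comm,
        diagonal_mul]
      ring
    rw [this, det_mul, det_diagonal]
    refine mul_ne_zero (prod_ne_zero_iff.mpr fun i _ => mul_ne_zero ?_ ?_)
      (isPrimitiveRoot_stdAddChar_one.det_pow_mul_val_ne_zero ?_ ?_)
    · exact Set.mem_toFinset.mp (v i).2
    · exact inv_ne_zero (Nat.cast_ne_zero.mpr (NeZero.ne p))
    · exact fun i i' h => v.injective (Subtype.ext h)
    · exact fun j j' h => u.injective (Subtype.ext h)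

theorem ZMod.finrank_span_setOf_mul_dft_vanishing {p : ℕ} [Fact p.Prime] (S : Finset (ZMod p))
    (ψ : ZMod p → ℂ) :
    finrank ℂ (span ℂ {f | ∃ a : ZMod p → ℂ, (∀ ξ ∉ S, 𝓕 a ξ = 0) ∧ f = ψ * a}) =
      min #S (support ψ).ncard := by
  rw [← coe_span_range_mul_invDFT_single, span_eq]
  exact finrank_span_range_mul_invDFT_single S ψ

end Fourier

open Complex in
theorem dim_Lstar_general (p : ℕ) [Fact p.Prime]
    (S : Finset (ZMod p)) (ψ : ZMod p → ℂ) :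
    Module.finrank ℂ (Submodule.span ℂ
        {f : ZMod p → ℂ | ∃ a : ZMod p → ℂ,
          (∀ ξ : ZMod p, ξ ∉ S →
            (∑ x : ZMod p, a x *
              Complex.exp (-2 * Real.pi * I * (ξ.val : ℂ) * (x.val : ℂ) / p)) = 0) ∧
          f = fun x => ψ x * a x}) =
      min S.card {x : ZMod p | ψ x ≠ 0}.ncard := by
  refine (congrArg (fun s : Set (ZMod p → ℂ) => finrank ℂ (span ℂ s)) ?_).trans
    (ZMod.finrank_span_setOf_mul_dft_vanishing S ψ)
  ext f
  simp only [Set.mem_ofPred_eq, ZMod.dft_apply_eq_sum_mul_exp]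
  rfl

open Complex in
/-- Statement 2.13: for `p` prime, nonempty `S ⊆ ℤ/pℤ` and `ψ : ℤ/pℤ → ℂ`, the space
`L*(S) = {f : f = ψ·a, supp â ⊆ S}` has dimension `min{|S|, |supp ψ|}`. -/
theorem dim_Lstar (p : ℕ) [Fact p.Prime]
    (S : Finset (ZMod p)) (hS : S.Nonempty) (ψ : ZMod p → ℂ) :
    Module.finrank ℂ (Submodule.span ℂ
        {f : ZMod p → ℂ | ∃ a : ZMod p → ℂ,
          (∀ ξ : ZMod p, ξ ∉ S →
            (∑ x : ZMod p, a x *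
              Complex.exp (-2 * Real.pi * I * (ξ.val : ℂ) * (x.val : ℂ) / p)) = 0) ∧
          f = fun x => ψ x * a x}) =
      min S.card {x : ZMod p | ψ x ≠ 0}.ncard :=
  dim_Lstar_general p S ψ
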